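/- arXiv:1110.4205 — 8 statements merged into one kernel-verified Lean document; each statement's English description precedes it below -/
import Mathlib

section
/- For a collection of n ≥ 1 circular arcs with all 2n endpoints distinct, if e is the number of pairs of arcs that intersect, d is the number of pairs of arcs that intersect in two connected components (double intersections), and C is the running count sum (the sum over all 2n endpoints of the number of arcs covering a point just clockwise of that endpoint), then d + e = (C - n)/2. -/
open scoped Classical

/-- The circle is parametrized by the half-open interval `[0,1)`.  `memArc x y p`
says that the point `p` lies on the closed arc going clockwise from `x` to `y`
(wrapping around the circle when `y` precedes `x`). -/
def memArc (x y p : ℝ) : Prop :=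
  if x ≤ y then x ≤ p ∧ p ≤ y else x ≤ p ∨ p ≤ y

/-- A circular arc, given by its left endpoint `x` and right endpoint `y`;
the arc runs clockwise from `x` to `y`. -/
structure Arc where
  x : ℝ
  y : ℝ

/-- Both endpoints of the arc lie on the circle `[0,1)`. -/
def Arc.InCircle (A : Arc) : Prop :=
  A.x ∈ Set.Ico (0 : ℝ) 1 ∧ A.y ∈ Set.Ico (0 : ℝ) 1

/-- The point `p` lies on the arc `A`. -/
def Arc.Mem (A : Arc) (p : ℝ) : Prop := memArc A.x A.y p

/-- Two arcs intersect: some point of the circle lies on both. -/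
def Intersects (A B : Arc) : Prop :=
  ∃ p ∈ Set.Ico (0 : ℝ) 1, A.Mem p ∧ B.Mem p

/-- Two arcs doubly intersect: each arc contains both endpoints of the other. -/
def DoublyIntersects (A B : Arc) : Prop :=
  A.Mem B.x ∧ A.Mem B.y ∧ B.Mem A.x ∧ B.Mem A.y

/-- The agreement number of a point `p`: the number of arcs of the family containing it. -/
noncomputable def agree {n : ℕ} (A : Fin n → Arc) (p : ℝ) : ℕ :=
  (Finset.univ.filter fun i => (A i).Mem p).card

/-- `M` is the maximum agreement number of the family. -/
def IsMaxAgreement {n : ℕ} (A : Fin n → Arc) (M : ℕ) : Prop :=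
  (∀ p ∈ Set.Ico (0 : ℝ) 1, agree A p ≤ M) ∧ ∃ p ∈ Set.Ico (0 : ℝ) 1, agree A p = M

/-- `m` is the minimum agreement number of the family. -/
def IsMinAgreement {n : ℕ} (A : Fin n → Arc) (m : ℕ) : Prop :=
  (∀ p ∈ Set.Ico (0 : ℝ) 1, m ≤ agree A p) ∧ ∃ p ∈ Set.Ico (0 : ℝ) 1, agree A p = m

/-- All `2n` endpoints of the family are pairwise distinct. -/
def DistinctEndpoints {n : ℕ} (A : Fin n → Arc) : Prop :=
  Function.Injective fun q : Fin n × Bool => if q.2 then (A q.1).x else (A q.1).y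

/-- Number of intersecting (unordered) pairs of arcs: the edge count of the
intersection graph. -/
noncomputable def edgeCount {n : ℕ} (A : Fin n → Arc) : ℕ :=
  (Finset.univ.filter fun q : Fin n × Fin n =>
    q.1 < q.2 ∧ Intersects (A q.1) (A q.2)).card

/-- Number of doubly intersecting (unordered) pairs of arcs. -/
noncomputable def doubleCount {n : ℕ} (A : Fin n → Arc) : ℕ :=
  (Finset.univ.filter fun q : Fin n × Fin n =>
    q.1 < q.2 ∧ DoublyIntersects (A q.1) (A q.2)).card

/-- The running count at the point `q`: the number of arcs covering points
immediately clockwise of `q` (for an endpoint `q` of the family, an arc covers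
points just clockwise of `q` iff `q` lies on the arc and `q` is not its right
endpoint, since all endpoints are distinct). -/
noncomputable def countAfter {n : ℕ} (A : Fin n → Arc) (q : ℝ) : ℕ :=
  (Finset.univ.filter fun i => (A i).Mem q ∧ q ≠ (A i).y).card

/-- The running count sum: the sum of the running counts over all `2n` endpoints. -/
noncomputable def runningCountSum {n : ℕ} (A : Fin n → Arc) : ℕ :=
  ∑ i : Fin n, (countAfter A (A i).x + countAfter A (A i).y)

/-! ### Auxiliary lemmas -/

lemma memArc_self_left (x y : ℝ) : memArc x y x := by
  unfold memArc; split
  · exact ⟨le_refl _, by assumption⟩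
  · exact Or.inl (le_refl _)

lemma memArc_self_right (x y : ℝ) : memArc x y y := by
  unfold memArc; split
  · exact ⟨by assumption, le_refl _⟩
  · exact Or.inr (le_refl _)

lemma memArc_or {a b c d p : ℝ} (h1 : memArc a b p) (h2 : memArc c d p) :
    memArc a b c ∨ memArc c d a := by
  unfold memArc at *
  rcases le_or_gt a b with hab | hab <;> rcases le_or_gt c d with hcd | hcd
  · rw [if_pos hab] at h1 ⊢; rw [if_pos hcd] at h2 ⊢
    rcases le_or_gt a c with h | h
    · exact Or.inl ⟨h, le_trans h2.1 h1.2⟩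
    · exact Or.inr ⟨h.le, le_trans h1.1 h2.2⟩
  · rw [if_pos hab] at h1 ⊢; rw [if_neg (not_le.2 hcd)] at h2 ⊢
    rcases h2 with h2 | h2
    · rcases le_or_gt a c with h | h
      · exact Or.inl ⟨h, le_trans h2 h1.2⟩
      · exact Or.inr (Or.inl h.le)
    · exact Or.inr (Or.inr (le_trans h1.1 h2))
  · rw [if_neg (not_le.2 hab)] at h1 ⊢; rw [if_pos hcd] at h2 ⊢
    rcases le_or_gt a c with h | h
    · exact Or.inl (Or.inl h)
    · rcases h1 with h1 | h1
      · exact Or.inr ⟨h.le, le_trans h1 h2.2⟩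
      · exact Or.inl (Or.inr (le_trans h2.1 h1))
  · rw [if_neg (not_le.2 hab)] at h1 ⊢; rw [if_neg (not_le.2 hcd)] at h2 ⊢
    rcases le_or_gt a c with h | h
    · exact Or.inl (Or.inl h)
    · exact Or.inr (Or.inl h.le)

lemma memArc_W1 {a b c d : ℝ} (h : memArc a b c) : memArc a b d ∨ memArc c d b := by
  unfold memArc at *
  rcases le_or_gt a b with hab | hab <;> rcases le_or_gt c d with hcd | hcd
  · rw [if_pos hab] at h ⊢; rw [if_pos hcd]
    rcases le_or_gt d b with h' | h'
    · exact Or.inl ⟨le_trans h.1 hcd, h'⟩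
    · exact Or.inr ⟨h.2, h'.le⟩
  · rw [if_pos hab] at h; rw [if_neg (not_le.2 hcd)]
    exact Or.inr (Or.inl h.2)
  · rw [if_neg (not_le.2 hab)] at h ⊢; rw [if_pos hcd]
    rcases h with h | h
    · exact Or.inl (Or.inl (le_trans h hcd))
    · rcases le_or_gt b d with h' | h'
      · exact Or.inr ⟨h, h'⟩
      · exact Or.inl (Or.inr h'.le)
  · rw [if_neg (not_le.2 hab)] at h ⊢; rw [if_neg (not_le.2 hcd)]
    rcases le_or_gt b d with h' | h'
    · exact Or.inr (Or.inr h')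
    · exact Or.inl (Or.inr h'.le)

lemma memArc_W3 {a b c d : ℝ} (h : memArc a b d) : memArc a b c ∨ memArc c d a := by
  unfold memArc at *
  rcases le_or_gt a b with hab | hab <;> rcases le_or_gt c d with hcd | hcd
  · rw [if_pos hab] at h ⊢; rw [if_pos hcd]
    rcases le_or_gt a c with h' | h'
    · exact Or.inl ⟨h', le_trans hcd h.2⟩
    · exact Or.inr ⟨h'.le, h.1⟩
  · rw [if_pos hab] at h; rw [if_neg (not_le.2 hcd)]
    exact Or.inr (Or.inr h.1)
  · rw [if_neg (not_le.2 hab)] at h ⊢; rw [if_pos hcd]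
    rcases h with h | h
    · rcases le_or_gt a c with h' | h'
      · exact Or.inl (Or.inl h')
      · exact Or.inr ⟨h'.le, h⟩
    · exact Or.inl (Or.inr (le_trans hcd h))
  · rw [if_neg (not_le.2 hab)] at h ⊢; rw [if_neg (not_le.2 hcd)]
    rcases le_or_gt a c with h' | h'
    · exact Or.inl (Or.inl h')
    · exact Or.inr (Or.inl h'.le)

lemma memArc_W5 {a b c d : ℝ} (hac : a ≠ c) (h1 : memArc a b c) (h2 : memArc c d a) :
    memArc a b d := by
  unfold memArc at *
  rcases le_or_gt a b with hab | hab <;> rcases le_or_gt c d with hcd | hcd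
  · rw [if_pos hab] at h1 ⊢; rw [if_pos hcd] at h2
    exact absurd (le_antisymm h1.1 h2.1) hac
  · rw [if_pos hab] at h1 ⊢; rw [if_neg (not_le.2 hcd)] at h2
    rcases h2 with h2 | h2
    · exact absurd (le_antisymm h1.1 h2) hac
    · exact ⟨h2, le_trans hcd.le h1.2⟩
  · rw [if_neg (not_le.2 hab)] at h1 ⊢; rw [if_pos hcd] at h2
    exact Or.inl h2.2
  · rw [if_neg (not_le.2 hab)] at h1 ⊢; rw [if_neg (not_le.2 hcd)] at h2
    rcases h2 with h2 | h2
    · rcases h1 with h1 | h1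
      · exact absurd (le_antisymm h1 h2) hac
      · exact Or.inr (le_trans hcd.le h1)
    · exact Or.inl h2

lemma memArc_W6 {a b c d : ℝ} (hbd : b ≠ d) (h1 : memArc a b d) (h2 : memArc c d b) :
    memArc a b c := by
  unfold memArc at *
  rcases le_or_gt a b with hab | hab <;> rcases le_or_gt c d with hcd | hcd
  · rw [if_pos hab] at h1 ⊢; rw [if_pos hcd] at h2
    exact absurd (le_antisymm h2.2 h1.2) hbd
  · rw [if_pos hab] at h1 ⊢; rw [if_neg (not_le.2 hcd)] at h2
    rcases h2 with h2 | h2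
    · exact ⟨le_trans h1.1 hcd.le, h2⟩
    · exact absurd (le_antisymm h2 h1.2) hbd
  · rw [if_neg (not_le.2 hab)] at h1 ⊢; rw [if_pos hcd] at h2
    exact Or.inr h2.1
  · rw [if_neg (not_le.2 hab)] at h1 ⊢; rw [if_neg (not_le.2 hcd)] at h2
    rcases h2 with h2 | h2
    · exact Or.inr h2
    · rcases h1 with h1 | h1
      · exact Or.inl (le_trans h1 hcd.le)
      · exact absurd (le_antisymm h2 h1) hbd

set_option maxHeartbeats 1000000 in
lemma pair_identity (P Q : Arc) (hP : P.InCircle) (hQ : Q.InCircle)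
    (hxx : P.x ≠ Q.x) (hyy : P.y ≠ Q.y) :
    ((if Q.Mem P.x then 1 else 0) + (if Q.Mem P.y then 1 else 0) +
     ((if P.Mem Q.x then 1 else 0) + (if P.Mem Q.y then 1 else 0)) : ℕ)
    = 2 * ((if DoublyIntersects P Q then 1 else 0) + (if Intersects P Q then 1 else 0)) := by
  have hI : Intersects P Q ↔ P.Mem Q.x ∨ Q.Mem P.x := by
    constructor
    · rintro ⟨p, _, hp1, hp2⟩
      exact memArc_or hp1 hp2
    · rintro (h | h)
      · exact ⟨Q.x, hQ.1, h, memArc_self_left _ _⟩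
      · exact ⟨P.x, hP.1, memArc_self_left _ _, h⟩
  have hD : DoublyIntersects P Q ↔ P.Mem Q.x ∧ P.Mem Q.y ∧ Q.Mem P.x ∧ Q.Mem P.y := Iff.rfl
  have w1 : P.Mem Q.x → P.Mem Q.y ∨ Q.Mem P.y := fun h => memArc_W1 h
  have w1' : Q.Mem P.x → Q.Mem P.y ∨ P.Mem Q.y := fun h => memArc_W1 h
  have w3 : P.Mem Q.y → P.Mem Q.x ∨ Q.Mem P.x := fun h => memArc_W3 h
  have w3' : Q.Mem P.y → Q.Mem P.x ∨ P.Mem Q.x := fun h => memArc_W3 h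
  have w5 : P.Mem Q.x → Q.Mem P.x → P.Mem Q.y := fun h h' => memArc_W5 hxx h h'
  have w5' : Q.Mem P.x → P.Mem Q.x → Q.Mem P.y := fun h h' => memArc_W5 hxx.symm h h'
  have w6 : P.Mem Q.y → Q.Mem P.y → P.Mem Q.x := fun h h' => memArc_W6 hyy h h'
  have w6' : Q.Mem P.y → P.Mem Q.y → Q.Mem P.x := fun h h' => memArc_W6 hyy.symm h h'
  rw [if_congr hI rfl rfl, if_congr hD rfl rfl]
  by_cases h1 : P.Mem Q.x <;> by_cases h2 : P.Mem Q.y <;>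
    by_cases h3 : Q.Mem P.x <;> by_cases h4 : Q.Mem P.y <;>
    first
      | exact absurd (w5 h1 h3) h2
      | exact absurd (w5' h3 h1) h4
      | exact absurd (w6 h2 h4) h1
      | exact absurd (w6' h4 h2) h3
      | exact absurd (w1 h1) (not_or.mpr ⟨h2, h4⟩)
      | exact absurd (w1' h3) (not_or.mpr ⟨h4, h2⟩)
      | exact absurd (w3 h2) (not_or.mpr ⟨h1, h3⟩)
      | exact absurd (w3' h4) (not_or.mpr ⟨h3, h1⟩)
      | simp [h1, h2, h3, h4]

/-- **Edge Formula** (Theorem 3.1): for a family of `n ≥ 1` circular arcs with all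
endpoints distinct, with `e` intersecting pairs, `d` doubly intersecting pairs and
running count sum `C`, we have `d + e = (C - n)/2`, i.e. `2(d + e) + n = C`. -/
theorem edge_formula {n : ℕ} (hn : 1 ≤ n) (A : Fin n → Arc)
    (hin : ∀ i, (A i).InCircle) (hdist : DistinctEndpoints A) :
    2 * (doubleCount A + edgeCount A) + n = runningCountSum A := by
  classical
  -- consequences of distinctness
  have hxy : ∀ i j, (A i).x ≠ (A j).y := by
    intro i j h
    have := @hdist (i, true) (j, false) (by simpa using h)
    simp at this
  have hyyinj : ∀ i j : Fin n, (A i).y = (A j).y → i = j := by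
    intro i j h
    have := @hdist (i, false) (j, false) (by simpa using h)
    simpa using this
  have hxxinj : ∀ i j : Fin n, (A i).x = (A j).x → i = j := by
    intro i j h
    have := @hdist (i, true) (j, true) (by simpa using h)
    simpa using this
  -- abbreviation for the per-ordered-pair endpoint count
  set c : Fin n → Fin n → ℕ := fun i j =>
    (if (A j).Mem (A i).x then 1 else 0) + (if (A j).Mem (A i).y then 1 else 0) with hc
  -- rewrite the running count sum
  have hrun : runningCountSum A = n + ∑ i : Fin n, ∑ j ∈ Finset.univ.erase i, c i j := by
    have hx : ∀ i, countAfter A (A i).x = ∑ j : Fin n, (if (A j).Mem (A i).x then 1 else 0) := by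
      intro i
      unfold countAfter
      rw [Finset.card_filter]
      exact Finset.sum_congr rfl fun j _ => if_congr (and_iff_left (hxy i j)) rfl rfl
    have hy : ∀ i, countAfter A (A i).y
        = ∑ j : Fin n, (if j ≠ i ∧ (A j).Mem (A i).y then 1 else 0) := by
      intro i
      unfold countAfter
      rw [Finset.card_filter]
      refine Finset.sum_congr rfl fun j _ => if_congr ?_ rfl rfl
      constructor
      · rintro ⟨hm, hne⟩
        exact ⟨fun hji => hne (by rw [hji]), hm⟩
      · rintro ⟨hne, hm⟩
        exact ⟨hm, fun h => hne (hyyinj j i h.symm)⟩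
    unfold runningCountSum
    calc (∑ i : Fin n, (countAfter A (A i).x + countAfter A (A i).y))
        = ∑ i : Fin n, ((if (A i).Mem (A i).x then 1 else 0)
            + (if i ≠ i ∧ (A i).Mem (A i).y then 1 else 0)
            + ∑ j ∈ Finset.univ.erase i, ((if (A j).Mem (A i).x then 1 else 0)
              + (if j ≠ i ∧ (A j).Mem (A i).y then 1 else 0))) := by
          refine Finset.sum_congr rfl fun i _ => ?_
          rw [hx i, hy i, ← Finset.sum_add_distrib,
            ← Finset.add_sum_erase Finset.univ
              (fun j => (if (A j).Mem (A i).x then 1 else 0)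
                + (if j ≠ i ∧ (A j).Mem (A i).y then 1 else 0)) (Finset.mem_univ i)]
      _ = ∑ i : Fin n, (1 + ∑ j ∈ Finset.univ.erase i, c i j) := by
          refine Finset.sum_congr rfl fun i _ => ?_
          congr 1
          · have hm : (A i).Mem (A i).x := memArc_self_left _ _
            rw [if_pos hm, if_neg (show ¬(i ≠ i ∧ (A i).Mem (A i).y) by simp)]
          · refine Finset.sum_congr rfl fun j hj => ?_
            rw [hc]
            congr 1
            exact if_congr (and_iff_right (Finset.ne_of_mem_erase hj)) rfl rfl
      _ = n + ∑ i : Fin n, ∑ j ∈ Finset.univ.erase i, c i j := by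
          rw [Finset.sum_add_distrib]
          simp
  -- the set of ordered pairs i < j
  set T : Finset (Fin n × Fin n) := Finset.univ.filter (fun q => q.1 < q.2) with hT
  -- rewrite the off-diagonal double sum as a sum over pairs i < j
  have hsplit : (∑ i : Fin n, ∑ j ∈ Finset.univ.erase i, c i j)
      = ∑ q ∈ T, (c q.1 q.2 + c q.2 q.1) := by
    have e1 : (∑ i : Fin n, ∑ j ∈ Finset.univ.erase i, c i j)
        = ∑ q ∈ Finset.univ.filter (fun q : Fin n × Fin n => q.1 ≠ q.2), c q.1 q.2 := by
      rw [Finset.sum_filter, ← Finset.univ_product_univ, Finset.sum_product]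
      refine Finset.sum_congr rfl fun i _ => ?_
      rw [← Finset.sum_filter]
      congr 1
      ext j
      simp [ne_comm]
    have e2 : (Finset.univ.filter (fun q : Fin n × Fin n => q.1 ≠ q.2)).filter
        (fun q => q.1 < q.2) = T := by
      rw [hT, Finset.filter_filter]
      refine Finset.filter_congr fun q _ => ?_
      constructor
      · exact fun h => h.2
      · exact fun h => ⟨ne_of_lt h, h⟩
    have e3 : (Finset.univ.filter (fun q : Fin n × Fin n => q.1 ≠ q.2)).filter
        (fun q => ¬ q.1 < q.2) = Finset.univ.filter (fun q : Fin n × Fin n => q.2 < q.1) := by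
      rw [Finset.filter_filter]
      refine Finset.filter_congr fun q _ => ?_
      constructor
      · rintro ⟨hne, hnl⟩
        exact hne.lt_or_gt.resolve_left hnl
      · exact fun h => ⟨(ne_of_lt h).symm, not_lt.2 h.le⟩
    have e4 : (∑ q ∈ Finset.univ.filter (fun q : Fin n × Fin n => q.2 < q.1), c q.1 q.2)
        = ∑ q ∈ T, c q.2 q.1 := by
      refine Finset.sum_equiv (Equiv.prodComm (Fin n) (Fin n)) (fun q => ?_) (fun q _ => rfl)
      simp [hT]
    rw [e1, ← Finset.sum_filter_add_sum_filter_not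
      (Finset.univ.filter (fun q : Fin n × Fin n => q.1 ≠ q.2)) (fun q => q.1 < q.2),
      e2, e3, e4, ← Finset.sum_add_distrib]
  -- rewrite the two pair counts as sums over T
  have hd : doubleCount A = ∑ q ∈ T, (if DoublyIntersects (A q.1) (A q.2) then 1 else 0) := by
    unfold doubleCount
    rw [show Finset.univ.filter (fun q : Fin n × Fin n =>
        q.1 < q.2 ∧ DoublyIntersects (A q.1) (A q.2))
      = T.filter (fun q => DoublyIntersects (A q.1) (A q.2)) from by
        rw [hT, Finset.filter_filter]]
    rw [Finset.card_filter]
  have he : edgeCount A = ∑ q ∈ T, (if Intersects (A q.1) (A q.2) then 1 else 0) := by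
    unfold edgeCount
    rw [show Finset.univ.filter (fun q : Fin n × Fin n =>
        q.1 < q.2 ∧ Intersects (A q.1) (A q.2))
      = T.filter (fun q => Intersects (A q.1) (A q.2)) from by
        rw [hT, Finset.filter_filter]]
    rw [Finset.card_filter]
  -- apply the pairwise identity on each pair
  have hpair : (∑ q ∈ T, (c q.1 q.2 + c q.2 q.1))
      = ∑ q ∈ T, 2 * ((if DoublyIntersects (A q.1) (A q.2) then 1 else 0)
          + (if Intersects (A q.1) (A q.2) then 1 else 0)) := by
    refine Finset.sum_congr rfl fun q hq => ?_
    have hlt : q.1 < q.2 := by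
      rw [hT] at hq
      exact (Finset.mem_filter.1 hq).2
    have hne : q.1 ≠ q.2 := ne_of_lt hlt
    exact pair_identity (A q.1) (A q.2) (hin q.1) (hin q.2)
      (fun h => hne (hxxinj _ _ h)) (fun h => hne (hyyinj _ _ h))
  rw [hrun, hsplit, hpair, hd, he, ← Finset.sum_add_distrib, ← Finset.mul_sum]
  omega
end

section
/- Let a sequence of 2n symbols from {L, R} contain exactly n L's and n R's, arranged cyclically, and define the associated running count sequence r_1, ..., r_{2n} by r_i = r_{i-1} + 1 if the i-th symbol is L and r_i = r_{i-1} - 1 if the i-th symbol is R (indices cyclic). Suppose the maximum value of the r_i is M, the minimum is m, and r_{2n} = m. Then the sum r_1 + ... + r_{2n} is at most (M+m)(M-m) + (2M-1)(n-M+m). -/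
/-!
Put `s i = M - r i`, a path with steps `±1` that starts and ends at `D = M - m`, is nonnegative,
and vanishes at an index `k` where `r` attains `M`. For a unit step `x → y` with `y ≥ 0` we have
`y² - x² + 1 = 2 (y - x) y ≤ 2 y`, and symmetrically `x² - y² + 1 ≤ 2 x` when `x ≥ 0`.
Telescoping the first estimate along the ascent from `s k = 0` to `s (2n) = D` and the second
along the descent from `s 0 = D` to `s k = 0` gives `2 ∑ s i ≥ 2n + 2D(D - 1)`, which is the
claimed bound after substituting `s i = M - r i`.
-/

open Finset

theorem sq_sub_sq_add_one_le_two_mul {x y : ℤ} (h : |y - x| = 1) (hy : 0 ≤ y) :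
    y ^ 2 - x ^ 2 + 1 ≤ 2 * y := by
  rcases abs_eq (zero_le_one' ℤ) |>.mp h with h | h <;> nlinarith

section UnitSteps

variable {f : ℕ → ℤ} {a b : ℕ}

theorem sq_sub_sq_add_le_two_mul_sum_Ico (hab : a ≤ b)
    (hstep : ∀ i ∈ Ico a b, |f (i + 1) - f i| = 1) (hf : ∀ i ∈ Ico a b, 0 ≤ f (i + 1)) :
    f b ^ 2 - f a ^ 2 + (b - a : ℕ) ≤ 2 * ∑ i ∈ Ico a b, f (i + 1) := by
  calc f b ^ 2 - f a ^ 2 + (b - a : ℕ)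
      = ∑ i ∈ Ico a b, (f (i + 1) ^ 2 - f i ^ 2 + 1) := by
        rw [sum_add_distrib, sum_Ico_sub (fun i => f i ^ 2) hab, sum_const, Nat.card_Ico,
          Nat.smul_one_eq_cast]
    _ ≤ ∑ i ∈ Ico a b, 2 * f (i + 1) :=
        sum_le_sum fun i hi => sq_sub_sq_add_one_le_two_mul (hstep i hi) (hf i hi)
    _ = 2 * ∑ i ∈ Ico a b, f (i + 1) := (mul_sum ..).symm

theorem sub_one_sq_sub_sq_add_le_two_mul_sum_Ico (hab : a ≤ b)
    (hstep : ∀ i ∈ Ico a b, |f (i + 1) - f i| = 1) (hf : ∀ i ∈ Ico a b, 0 ≤ f i) :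
    (f a - 1) ^ 2 - (f b - 1) ^ 2 + (b - a : ℕ) ≤ 2 * ∑ i ∈ Ico a b, f (i + 1) := by
  calc (f a - 1) ^ 2 - (f b - 1) ^ 2 + (b - a : ℕ)
      = ∑ i ∈ Ico a b, (-(f (i + 1) - 1) ^ 2 - -(f i - 1) ^ 2 + 1) := by
        rw [sum_add_distrib, sum_Ico_sub (fun i => -(f i - 1) ^ 2) hab, sum_const, Nat.card_Ico,
          Nat.smul_one_eq_cast]
        ring
    _ ≤ ∑ i ∈ Ico a b, 2 * f (i + 1) := by
        refine sum_le_sum fun i hi => ?_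
        have := sq_sub_sq_add_one_le_two_mul (by rw [abs_sub_comm]; exact hstep i hi) (hf i hi)
        linarith
    _ = 2 * ∑ i ∈ Ico a b, f (i + 1) := (mul_sum ..).symm

end UnitSteps

theorem sub_one_sq_add_sq_add_le_two_mul_sum_range {f : ℕ → ℤ} {N k : ℕ} (hkN : k ≤ N)
    (hstep : ∀ i < N, |f (i + 1) - f i| = 1) (hf : ∀ i ≤ N, 0 ≤ f i) (hfk : f k = 0) :
    (f 0 - 1) ^ 2 + f N ^ 2 + N ≤ 2 * ∑ i ∈ range N, f (i + 1) + 1 := by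
  have hdown := sub_one_sq_sub_sq_add_le_two_mul_sum_Ico (f := f) (Nat.zero_le k)
    (fun i hi => hstep i ((mem_Ico.1 hi).2.trans_le hkN))
    (fun i hi => hf i ((mem_Ico.1 hi).2.le.trans hkN))
  have hup := sq_sub_sq_add_le_two_mul_sum_Ico (f := f) hkN
    (fun i hi => hstep i (mem_Ico.1 hi).2) (fun i hi => hf (i + 1) (mem_Ico.1 hi).2)
  rw [range_eq_Ico, ← sum_Ico_consecutive _ (Nat.zero_le k) hkN]
  rw [hfk] at hdown hup
  push_cast [Nat.sub_zero, Nat.cast_sub hkN] at hdown hup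
  linarith

theorem running_count_sum_le_general (n : ℕ) (q : ℕ → Bool) (r : ℕ → ℤ)
    (M m : ℤ)
    (hstep : ∀ i ∈ Finset.Icc 1 (2*n), r i = r (i-1) + if q i then 1 else -1)
    (hcyc : r 0 = r (2*n))
    (hMub : ∀ i ∈ Finset.Icc 1 (2*n), r i ≤ M)
    (hMmem : ∃ i ∈ Finset.Icc 1 (2*n), r i = M)
    (hend : r (2*n) = m) :
    ∑ i ∈ Finset.Icc 1 (2*n), r i ≤ (M+m)*(M-m) + (2*M-1)*((n:ℤ)-M+m) := by
  obtain ⟨k, hk, hrk⟩ := hMmem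
  rw [mem_Icc] at hk
  have hunit : ∀ i < 2 * n, |(M - r (i + 1)) - (M - r i)| = 1 := by
    intro i hi
    rw [hstep (i + 1) (mem_Icc.2 ⟨by omega, hi⟩), Nat.add_sub_cancel]
    split <;> simp
  have hnonneg : ∀ i ≤ 2 * n, 0 ≤ M - r i := by
    intro i hi
    obtain rfl | hi0 := Nat.eq_zero_or_pos i
    · rw [hcyc]; linarith [hMub (2 * n) (mem_Icc.2 ⟨by omega, le_rfl⟩)]
    · linarith [hMub i (mem_Icc.2 ⟨hi0, hi⟩)]
  have harea := sub_one_sq_add_sq_add_le_two_mul_sum_range (f := fun i => M - r i) hk.2 hunit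
    hnonneg (sub_eq_zero.2 hrk.symm)
  have hsum : ∑ i ∈ range (2 * n), (M - r (i + 1)) = 2 * n * M - ∑ i ∈ Icc 1 (2 * n), r i := by
    rw [range_eq_Ico, sum_Ico_add' (fun i => M - r i), ← Ico_add_one_right_eq_Icc, sum_sub_distrib]
    simp
  simp only [hsum, hcyc, hend] at harea
  push_cast at harea
  linarith

/-- Proposition 4.1 (upper bound): let `q : ℕ → Bool` describe a cyclic
LR-sequence of length `2n` (`q i = true` meaning the `i`-th symbol is `L`),
with exactly `n` L's and `n` R's.  Let `r` be the associated running count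
sequence: `r i = r (i-1) + 1` at an `L` and `r i = r (i-1) - 1` at an `R`,
cyclically consistent (`r 0 = r (2n)`).  If `M` is the maximum and `m` the
minimum of the `r i` over `1 ≤ i ≤ 2n`, and `r (2n) = m`, then
`r 1 + ⋯ + r (2n) ≤ (M+m)(M-m) + (2M-1)(n-M+m)`. -/
theorem running_count_sum_le (n : ℕ) (hn : 1 ≤ n) (q : ℕ → Bool) (r : ℕ → ℤ)
    (M m : ℤ)
    (hq : ((Finset.Icc 1 (2*n)).filter fun i => q i = true).card = n)
    (hstep : ∀ i ∈ Finset.Icc 1 (2*n), r i = r (i-1) + if q i then 1 else -1)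
    (hcyc : r 0 = r (2*n))
    (hMub : ∀ i ∈ Finset.Icc 1 (2*n), r i ≤ M)
    (hMmem : ∃ i ∈ Finset.Icc 1 (2*n), r i = M)
    (hmlb : ∀ i ∈ Finset.Icc 1 (2*n), m ≤ r i)
    (hmmem : ∃ i ∈ Finset.Icc 1 (2*n), r i = m)
    (hend : r (2*n) = m) :
    ∑ i ∈ Finset.Icc 1 (2*n), r i ≤ (M+m)*(M-m) + (2*M-1)*((n:ℤ)-M+m) :=
  running_count_sum_le_general n q r M m hstep hcyc hMub hMmem hend
end

section
/- For integers n ≥ 1 and M, m with 0 ≤ m < M ≤ n and r_{2n} = m, the cyclic ±1 sequence (running count sequence) of length 2n with n increments and n decrements, maximum M, and minimum m given by [m+1, m+2, ..., M-1, M, M-1, M, ..., M, M-1, M-2, ..., m+1, m] (first rising from m+1 to M, then alternating M-1, M for 2(n-M+m) terms counted appropriately, then descending from M-1 down to m) attains the sum (M+m)(M-m) + (2M-1)(n-M+m), and this sum is maximal among all such sequences. -/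
/-!
Every admissible `r` satisfies `r i ≤ m + i` and `r i ≤ m + (2n - i)` (unit steps away from
`r 0 = r (2n) = m`), `r i ≤ M`, and `r i ≡ m + i [ZMOD 2]`. The proposed sequence is exactly the
pointwise minimum of these bounds, so it dominates `r` term by term. Its number of increases is
forced by telescoping, since it returns to its starting value.
-/

open Finset

lemma Finset.sum_Icc_one_eq_sum_range {M : Type*} [AddCommMonoid M] (f : ℕ → M) (N : ℕ) :
    ∑ i ∈ Icc 1 N, f i = ∑ i ∈ range N, f (i + 1) := by
  induction N with
  | zero => simp
  | succ N ih => rw [sum_Icc_succ_top (by omega), ih, sum_range_succ]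

def UnitSteps (r : ℕ → ℤ) (N : ℕ) : Prop :=
  ∀ i ∈ Icc 1 N, r i = r (i - 1) + 1 ∨ r i = r (i - 1) - 1

namespace UnitSteps

variable {r : ℕ → ℤ} {N : ℕ}

lemma abs_sub_le (h : UnitSteps r N) {i j : ℕ} (hij : i ≤ j) (hj : j ≤ N) :
    |r j - r i| ≤ (j : ℤ) - i := by
  induction j, hij using Nat.le_induction with
  | base => simp
  | succ j hij ih =>
    have := ih (by omega)
    rcases h (j + 1) (mem_Icc.2 ⟨by omega, hj⟩) with hs | hs <;>
      · rw [Nat.add_sub_cancel] at hs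
        rw [abs_le] at this ⊢
        push_cast
        constructor <;> linarith [this.1, this.2]

lemma sub_modEq (h : UnitSteps r N) {i j : ℕ} (hij : i ≤ j) (hj : j ≤ N) :
    r j ≡ r i + (j - i : ℤ) [ZMOD 2] := by
  induction j, hij using Nat.le_induction with
  | base => simp
  | succ j hij ih =>
    have := ih (by omega)
    rcases h (j + 1) (mem_Icc.2 ⟨by omega, hj⟩) with hs | hs <;>
      · rw [Nat.add_sub_cancel] at hs
        unfold Int.ModEq at this ⊢
        push_cast
        omega

/-- The net displacement is the number of up-steps minus the number of down-steps. -/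
lemma two_mul_card_up (h : UnitSteps r N) :
    2 * (#{i ∈ Icc 1 N | r i = r (i - 1) + 1} : ℤ) = N + (r N - r 0) := by
  have tele : ∑ i ∈ Icc 1 N, (r i - r (i - 1)) = r N - r 0 := by
    rw [sum_Icc_one_eq_sum_range]
    exact sum_range_sub r N
  have steps : ∑ i ∈ Icc 1 N, (r i - r (i - 1))
      = ∑ i ∈ Icc 1 N, if r i = r (i - 1) + 1 then (1 : ℤ) else -1 :=
    sum_congr rfl fun i hi => by rcases h i hi with hs | hs <;> split_ifs <;> omega
  have hcard := card_filter_add_card_filter_not (s := Icc 1 N) (fun i => r i = r (i - 1) + 1)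
  rw [steps, sum_ite, sum_const, sum_const] at tele
  rw [Nat.card_Icc, Nat.add_sub_cancel] at hcard
  simp only [nsmul_eq_mul, mul_one, mul_neg] at tele
  omega

end UnitSteps

lemma sum_range_two_mul_succ_mod_two (k : ℕ) : ∑ x ∈ range (2 * k), (x + 1) % 2 = k := by
  induction k with
  | zero => rfl
  | succ k ih => rw [Nat.mul_succ, sum_range_succ, sum_range_succ, ih]; omega

/-- Rise from `m` to `m + d` in `d` steps, alternate `k` times between `m + d - 1` and `m + d`,
then descend back to `m` in `d` steps: the paper's sequence, with `d = M - m`, `k = n - M + m`. -/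
def plateauSeq (m d k i : ℕ) : ℤ :=
  if i ≤ d then m + i
  else if i ≤ d + 2 * k then m + d - ((i - d) % 2 : ℕ)
  else m + d - (i - (d + 2 * k) : ℕ)

section plateauSeq

variable (m d k : ℕ)

lemma unitSteps_plateauSeq : UnitSteps (plateauSeq m d k) (2 * (d + k)) := by
  intro i hi
  rw [mem_Icc] at hi
  simp only [plateauSeq]
  split_ifs <;> omega

lemma plateauSeq_zero : plateauSeq m d k 0 = m := by simp [plateauSeq]

lemma plateauSeq_last : plateauSeq m d k (2 * (d + k)) = m := by
  simp only [plateauSeq]; split_ifs <;> omega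

lemma plateauSeq_self : plateauSeq m d k d = m + d := by simp [plateauSeq]

lemma plateauSeq_le (i : ℕ) : plateauSeq m d k i ≤ m + d := by
  simp only [plateauSeq]; split_ifs <;> omega

lemma le_plateauSeq (hd : 0 < d) {i : ℕ} (hi : i ≤ 2 * (d + k)) :
    (m : ℤ) ≤ plateauSeq m d k i := by
  simp only [plateauSeq]; split_ifs <;> omega

lemma card_up_plateauSeq :
    #{i ∈ Icc 1 (2 * (d + k)) | plateauSeq m d k i = plateauSeq m d k (i - 1) + 1} = d + k := by
  have := (unitSteps_plateauSeq m d k).two_mul_card_up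
  rw [plateauSeq_zero, plateauSeq_last] at this
  omega

lemma sum_plateauSeq :
    ∑ i ∈ Icc 1 (2 * (d + k)), plateauSeq m d k i = (2 * m + d) * d + (2 * (m + d) - 1) * k := by
  rw [sum_Icc_one_eq_sum_range, show 2 * (d + k) = d + 2 * k + d by ring, sum_range_add,
    sum_range_add]
  have slopes : ∑ x ∈ range d, plateauSeq m d k (x + 1)
      + ∑ x ∈ range d, plateauSeq m d k (d + 2 * k + x + 1) = (2 * m + d) * d := by
    have pair : ∀ x ∈ range d,
        plateauSeq m d k (x + 1) + plateauSeq m d k (d + 2 * k + x + 1) = 2 * m + d := by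
      intro x hx
      rw [mem_range] at hx
      simp only [plateauSeq]
      split_ifs <;> omega
    rw [← sum_add_distrib, sum_congr rfl pair, sum_const, card_range, nsmul_eq_mul]
    ring
  have plateau : ∑ x ∈ range (2 * k), plateauSeq m d k (d + x + 1)
      = ∑ x ∈ range (2 * k), ((m + d : ℤ) - ((x + 1) % 2 : ℕ)) := by
    refine sum_congr rfl fun x hx => ?_
    rw [mem_range] at hx
    simp only [plateauSeq]
    split_ifs <;> omega
  rw [plateau, sum_sub_distrib, ← Nat.cast_sum, sum_range_two_mul_succ_mod_two, sum_const,
    card_range, nsmul_eq_mul]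
  push_cast
  linear_combination slopes

lemma UnitSteps.apply_le_plateauSeq {r : ℕ → ℤ} (h : UnitSteps r (2 * (d + k))) (h0 : r 0 = m)
    (hlast : r (2 * (d + k)) = m) (hle : ∀ i ∈ Icc 1 (2 * (d + k)), r i ≤ m + d) :
    ∀ i ∈ Icc 1 (2 * (d + k)), r i ≤ plateauSeq m d k i := by
  intro i hi
  have hiN := (mem_Icc.1 hi).2
  have rise := abs_le.1 (h.abs_sub_le (Nat.zero_le i) hiN)
  have fall := abs_le.1 (h.abs_sub_le hiN le_rfl)
  have parity := h.sub_modEq (Nat.zero_le i) hiN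
  have top := hle i hi
  unfold Int.ModEq at parity
  simp only [plateauSeq]
  split_ifs <;> push_cast <;> omega

end plateauSeq

/-- Proposition 4.1 (the maximal running count sequence): for `0 ≤ m < M ≤ n`,
the cyclic ±1 sequence `[m+1, …, M-1, M, M-1, M, …, M-1, M, M-1, …, m+1, m]`
(rising from `m+1` to `M`, then `M-1, M` repeated `n-M+m` times, then
descending to `m`) is a valid running count sequence of length `2n` (steps of
`±1`, `n` increases and `n` decreases, maximum `M`, minimum `m`, last term `m`),
its sum equals `(M+m)(M-m) + (2M-1)(n-M+m)`, and this sum is maximal among all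
such sequences. -/
theorem maximal_running_count_sequence (n M m : ℕ) (hmM : m < M) (hMn : M ≤ n)
    (r' : ℕ → ℤ)
    (hr' : ∀ i, r' i =
      if i ≤ M - m then (m : ℤ) + i
      else if i ≤ (M - m) + 2*(n - M + m) then (M : ℤ) - (((i - (M - m)) % 2 : ℕ) : ℤ)
      else (M : ℤ) - ((i - ((M - m) + 2*(n - M + m)) : ℕ) : ℤ)) :
    -- validity of r' as a running count sequence
    (∀ i ∈ Finset.Icc 1 (2*n), r' i = r' (i-1) + 1 ∨ r' i = r' (i-1) - 1) ∧
    ((Finset.Icc 1 (2*n)).filter fun i => r' i = r' (i-1) + 1).card = n ∧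
    (∀ i ∈ Finset.Icc 1 (2*n), r' i ≤ (M : ℤ)) ∧
    (∃ i ∈ Finset.Icc 1 (2*n), r' i = (M : ℤ)) ∧
    (∀ i ∈ Finset.Icc 1 (2*n), (m : ℤ) ≤ r' i) ∧
    r' (2*n) = (m : ℤ) ∧
    -- its sum attains the claimed value
    (∑ i ∈ Finset.Icc 1 (2*n), r' i
        = ((M : ℤ)+m)*((M : ℤ)-m) + (2*(M : ℤ)-1)*((n : ℤ)-M+m)) ∧
    -- and this sum is maximal among all valid running count sequences
    (∀ r : ℕ → ℤ,
      (∀ i ∈ Finset.Icc 1 (2*n), r i = r (i-1) + 1 ∨ r i = r (i-1) - 1) →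
      ((Finset.Icc 1 (2*n)).filter fun i => r i = r (i-1) + 1).card = n →
      r 0 = r (2*n) →
      (∀ i ∈ Finset.Icc 1 (2*n), r i ≤ (M : ℤ)) →
      (∃ i ∈ Finset.Icc 1 (2*n), r i = (M : ℤ)) →
      (∀ i ∈ Finset.Icc 1 (2*n), (m : ℤ) ≤ r i) →
      (∃ i ∈ Finset.Icc 1 (2*n), r i = (m : ℤ)) →
      r (2*n) = (m : ℤ) →
      ∑ i ∈ Finset.Icc 1 (2*n), r i ≤ ∑ i ∈ Finset.Icc 1 (2*n), r' i) := by
  set d := M - m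
  set k := n - M + m
  have hr : r' = plateauSeq m d k := funext fun i => by
    rw [hr', plateauSeq, show (M : ℤ) = m + d by omega]
  subst hr
  have hN : 2 * n = 2 * (d + k) := by omega
  have hM : (M : ℤ) = m + d := by omega
  have hd : 0 < d := by omega
  have hn : (n : ℤ) = d + k := by omega
  rw [hN, hM, hn]
  refine ⟨unitSteps_plateauSeq m d k, by rw [card_up_plateauSeq]; omega,
    fun i _ => plateauSeq_le m d k i,
    ⟨d, mem_Icc.2 ⟨hd, by omega⟩, plateauSeq_self m d k⟩,
    fun i hi => le_plateauSeq m d k hd (mem_Icc.1 hi).2, plateauSeq_last m d k,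
    by rw [sum_plateauSeq]; ring, ?_⟩
  intro r hstep _ hcyc hle _ _ _ hlast
  exact sum_le_sum (UnitSteps.apply_le_plateauSeq m d k hstep (hcyc.trans hlast) hlast hle)
end

section
/- Any collection of n circular arcs with maximum agreement number M and minimum agreement number m has at most (m/2)(2M − m − 1) doubly intersecting pairs of arcs, i.e., d ≤ m(M−1) − C(m,2). -/
open scoped Classical

/-! Fix a point `p` of minimum agreement `m` and count the ordered pairs `(u, v)` of distinct arcs
such that `u` passes through `p` and `v` through the right endpoint of `u`. Each of the `m` arcs
through `p` has at most `M - 1` partners `v`, so there are at most `m (M - 1)` such pairs.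
Conversely, of two arcs through `p` one contains the right endpoint of the other, so every pair of
arcs through `p` is counted; two doubly intersecting arcs cover the circle, so one of them passes
through `p` and the pair is counted; and a pair of both kinds is counted in both orders. Hence
`d + C(m, 2) ≤ m (M - 1)`. -/

open Finset

theorem card_filter_lt_add_card_filter_lt_le {α : Type*} [Fintype α] [LinearOrder α]
    {P Q R : α → α → Prop} [DecidableRel P] [DecidableRel Q] [DecidableRel R]
    (hor : ∀ i j, i < j → P i j ∨ Q i j → R i j ∨ R j i)
    (hand : ∀ i j, i < j → P i j → Q i j → R i j ∧ R j i) :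
    #{q : α × α | q.1 < q.2 ∧ P q.1 q.2} + #{q : α × α | q.1 < q.2 ∧ Q q.1 q.2} ≤
      #{q : α × α | R q.1 q.2} := by
  have hswap : #{q : α × α | q.1 < q.2 ∧ R q.2 q.1} = #{q : α × α | q.2 < q.1 ∧ R q.1 q.2} :=
    card_equiv (Equiv.prodComm α α) (by simp)
  have hsplit : #{q : α × α | q.1 < q.2 ∧ R q.1 q.2} + #{q : α × α | q.2 < q.1 ∧ R q.1 q.2} ≤
      #{q : α × α | R q.1 q.2} := by
    rw [← card_union_of_disjoint (disjoint_filter.2 fun q _ h h' => h.1.asymm h'.1)]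
    exact card_le_card fun q => by simp only [mem_union, mem_filter]; tauto
  have hpairs : #{q : α × α | q.1 < q.2 ∧ P q.1 q.2} + #{q : α × α | q.1 < q.2 ∧ Q q.1 q.2} ≤
      #{q : α × α | q.1 < q.2 ∧ R q.1 q.2} + #{q : α × α | q.1 < q.2 ∧ R q.2 q.1} := by
    simp only [card_filter, ← sum_add_distrib]
    refine sum_le_sum fun q _ => ?_
    by_cases hq : q.1 < q.2
    · have := hor _ _ hq
      have := hand _ _ hq
      simp only [hq, true_and]
      split_ifs <;> simp_all
    · simp [hq]
  omega

lemma Arc.mem_y (A : Arc) : A.Mem A.y := by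
  unfold Arc.Mem memArc
  split_ifs with h
  · exact ⟨h, le_rfl⟩
  · exact Or.inr le_rfl

lemma Arc.mem_y_or_mem_y_of_mem {A B : Arc} {p : ℝ} (hA : A.Mem p) (hB : B.Mem p) :
    B.Mem A.y ∨ A.Mem B.y := by
  unfold Arc.Mem memArc at *
  split_ifs at * <;> grind

lemma DoublyIntersects.mem_or_mem {A B : Arc} (h : DoublyIntersects A B) (hx : A.x ≠ B.x)
    (p : ℝ) : A.Mem p ∨ B.Mem p := by
  obtain ⟨h1, h2, h3, h4⟩ := h
  unfold Arc.Mem memArc at *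
  split_ifs at * <;> grind

section CoverPairs

variable {n : ℕ} (A : Fin n → Arc)

noncomputable def coverPairs (p : ℝ) : Finset (Fin n × Fin n) :=
  {q | (A q.1).Mem p ∧ q.1 ≠ q.2 ∧ (A q.2).Mem (A q.1).y}

lemma card_filter_ne_mem_y_add_one (u : Fin n) :
    #{v | u ≠ v ∧ (A v).Mem (A u).y} + 1 = agree A (A u).y := by
  have hu : u ∈ ({v | (A v).Mem (A u).y} : Finset (Fin n)) := by simpa using (A u).mem_y
  rw [agree, ← card_erase_add_one hu]
  congr 2
  ext v
  simp only [mem_filter, mem_erase, mem_univ, true_and, ne_comm]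

lemma card_coverPairs_le {M : ℕ} (hin : ∀ i, (A i).InCircle)
    (hM : ∀ p ∈ Set.Ico (0 : ℝ) 1, agree A p ≤ M) (p : ℝ) :
    (#(coverPairs A p) : ℤ) ≤ agree A p * ((M : ℤ) - 1) := by
  have hfiber (u : Fin n) : (#{v | (A u).Mem p ∧ u ≠ v ∧ (A v).Mem (A u).y} : ℤ) ≤
      if (A u).Mem p then (M : ℤ) - 1 else 0 := by
    split_ifs with hu
    · have := card_filter_ne_mem_y_add_one A u
      have := hM _ (hin u).2
      simp only [hu, true_and]
      omega
    · simp [hu]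
  have hsum : #(coverPairs A p) = ∑ u, #{v | (A u).Mem p ∧ u ≠ v ∧ (A v).Mem (A u).y} := by
    rw [coverPairs, card_filter, Fintype.sum_prod_type]
    simp only [card_filter]
  calc (#(coverPairs A p) : ℤ) = ∑ u, (#{v | (A u).Mem p ∧ u ≠ v ∧ (A v).Mem (A u).y} : ℤ) := by
        exact_mod_cast hsum
    _ ≤ ∑ u, if (A u).Mem p then (M : ℤ) - 1 else 0 := sum_le_sum fun u _ => hfiber u
    _ = agree A p * ((M : ℤ) - 1) := by rw [← sum_filter, sum_const, nsmul_eq_mul, agree]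

lemma doubleCount_add_choose_le_card_coverPairs (hdist : DistinctEndpoints A) (p : ℝ) :
    doubleCount A + (agree A p).choose 2 ≤ #(coverPairs A p) := by
  have hx {i j : Fin n} (hij : i ≠ j) : (A i).x ≠ (A j).x := fun h =>
    hij (congrArg Prod.fst (@hdist (i, true) (j, true) h))
  have hchoose : (agree A p).choose 2 =
      #{q : Fin n × Fin n | q.1 < q.2 ∧ (A q.1).Mem p ∧ (A q.2).Mem p} := by
    rw [agree, ← card_product_filter_lt (s := {i | (A i).Mem p})]
    congr 1
    ext q
    simp only [mem_filter, mem_product, mem_univ, true_and]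
    tauto
  rw [doubleCount, hchoose, coverPairs]
  refine card_filter_lt_add_card_filter_lt_le (P := fun i j => DoublyIntersects (A i) (A j))
    (Q := fun i j => (A i).Mem p ∧ (A j).Mem p)
    (R := fun u v => (A u).Mem p ∧ u ≠ v ∧ (A v).Mem (A u).y) ?_ ?_
  · rintro i j hij (hd | ⟨hi, hj⟩)
    · rcases hd.mem_or_mem (hx hij.ne) p with hi | hj
      · exact Or.inl ⟨hi, hij.ne, hd.2.2.2⟩
      · exact Or.inr ⟨hj, hij.ne', hd.2.1⟩
    · rcases Arc.mem_y_or_mem_y_of_mem hi hj with h | h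
      · exact Or.inl ⟨hi, hij.ne, h⟩
      · exact Or.inr ⟨hj, hij.ne', h⟩
  · rintro i j hij hd ⟨hi, hj⟩
    exact ⟨⟨hi, hij.ne, hd.2.2.2⟩, ⟨hj, hij.ne', hd.2.1⟩⟩

end CoverPairs

/-- Theorem 6.1 (`d_max`): a family of `n` circular arcs with maximum agreement
number `M` and minimum agreement number `m` has at most
`(m/2)(2M - m - 1) = m(M-1) - C(m,2)` doubly intersecting pairs. -/
theorem double_count_upper_bound {n : ℕ} (A : Fin n → Arc)
    (hin : ∀ i, (A i).InCircle) (hdist : DistinctEndpoints A) (M m : ℕ)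
    (hM : IsMaxAgreement A M) (hm : IsMinAgreement A m) :
    (doubleCount A : ℤ) ≤ m * ((M : ℤ) - 1) - m.choose 2 := by
  obtain ⟨p, -, rfl⟩ := hm.2
  have hlower := doubleCount_add_choose_le_card_coverPairs A hdist p
  have hupper := card_coverPairs_le A hin hM.1 p
  linarith
end

section
/- There exists a collection of n circular arcs with maximum agreement number M and minimum agreement number m (where 0 ≤ m < M ≤ n) having exactly m(M−1) − C(m,2) doubly intersecting pairs of arcs. -/
open scoped Classical

namespace MD

noncomputable def pt (n k : ℕ) : ℝ := k / (32*n)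

lemma pt_le {n : ℕ} (hn : 0 < n) {a b : ℕ} : pt n a ≤ pt n b ↔ a ≤ b := by
  unfold pt
  rw [div_le_div_iff_of_pos_right (by positivity), Nat.cast_le]

lemma pt_lt {n : ℕ} (hn : 0 < n) {a b : ℕ} : pt n a < pt n b ↔ a < b := by
  unfold pt
  rw [div_lt_div_iff_of_pos_right (by positivity), Nat.cast_lt]

lemma pt_inj {n : ℕ} (hn : 0 < n) {a b : ℕ} (h : pt n a = pt n b) : a = b := by
  have h1 := (pt_le hn (a := a) (b := b)).1 h.le
  have h2 := (pt_le hn (a := b) (b := a)).1 h.ge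
  omega

lemma pt_nonneg (n k : ℕ) : 0 ≤ pt n k := by unfold pt; positivity

lemma pt_lt_one {n k : ℕ} (hn : 0 < n) (h : k < 32*n) : pt n k < 1 := by
  unfold pt
  rw [div_lt_one (by positivity)]
  exact_mod_cast h

lemma card_val_lt {n k : ℕ} (hk : k ≤ n) :
    (Finset.univ.filter fun i : Fin n => i.val < k).card = k := by
  rw [← Finset.card_range k]
  apply Finset.card_nbij (i := Fin.val)
  · intro a ha; simp at ha ⊢; exact ha
  · intro a _ b _ h; exact Fin.val_injective h
  · intro a ha; simp at ha ⊢; exact ⟨⟨a, lt_of_lt_of_le ha hk⟩, ha, rfl⟩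

lemma card_val_between {n a M : ℕ} (hM : M ≤ n) :
    (Finset.univ.filter fun j : Fin n => a < j.val ∧ j.val < M).card = M - a - 1 := by
  have h : ((Finset.univ.filter fun j : Fin n => a < j.val ∧ j.val < M).image Fin.val)
      = Finset.Ico (a+1) M := by
    ext x; simp [Finset.mem_Ico]
    constructor
    · rintro ⟨j, ⟨h1, h2⟩, rfl⟩; omega
    · rintro ⟨h1, h2⟩
      refine ⟨⟨x, lt_of_lt_of_le h2 hM⟩, ⟨?_, ?_⟩, rfl⟩ <;> simp <;> omega
  rw [← Finset.card_image_of_injective _ Fin.val_injective, h, Nat.card_Ico]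
  omega

lemma sum_id_choose (m : ℕ) : ∑ i ∈ Finset.range m, i = m.choose 2 := by
  induction m with
  | zero => simp
  | succ k ih =>
    rw [Finset.sum_range_succ, ih, Nat.choose_succ_succ]
    simp [Nat.choose_one_right]; omega

def kval (n m M i : ℕ) (b : Bool) : ℕ :=
  if b then (if i < m then 4*n+4*i+6 else if i < M then 4*i+4 else 20*n+4*i)
  else (if i < m then 4*n+4*i+4 else if i < M then 16*n-4*i-4 else 20*n+4*i+1)

noncomputable def myArc (n m M i : ℕ) : Arc :=
  ⟨pt n (kval n m M i true), pt n (kval n m M i false)⟩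

variable {n m M : ℕ}

lemma mem_big (hn : 0 < n) {i : ℕ} (hi : i < m) {p : ℝ} :
    (myArc n m M i).Mem p ↔ (pt n (4*n+4*i+6) ≤ p ∨ p ≤ pt n (4*n+4*i+4)) := by
  have hxy : ¬ (pt n (4*n+4*i+6) ≤ pt n (4*n+4*i+4)) := by rw [pt_le hn]; omega
  simp [Arc.Mem, memArc, myArc, kval, hi, hxy]

lemma mem_mid (hn : 0 < n) (hMn : M ≤ n) {i : ℕ} (hi1 : ¬ i < m) (hi2 : i < M) {p : ℝ} :
    (myArc n m M i).Mem p ↔ (pt n (4*i+4) ≤ p ∧ p ≤ pt n (16*n-4*i-4)) := by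
  have hxy : pt n (4*i+4) ≤ pt n (16*n-4*i-4) := by rw [pt_le hn]; omega
  simp [Arc.Mem, memArc, myArc, kval, hi1, hi2, hxy]

lemma mem_small (hn : 0 < n) {i : ℕ} (hi1 : ¬ i < m) (hi2 : ¬ i < M) {p : ℝ} :
    (myArc n m M i).Mem p ↔ (pt n (20*n+4*i) ≤ p ∧ p ≤ pt n (20*n+4*i+1)) := by
  have hxy : pt n (20*n+4*i) ≤ pt n (20*n+4*i+1) := by rw [pt_le hn]; omega
  simp [Arc.Mem, memArc, myArc, kval, hi1, hi2, hxy]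

lemma mem_pt (hn : 0 < n) (hMn : M ≤ n) {i : ℕ} (k : ℕ) :
    (myArc n m M i).Mem (pt n k) ↔
      (if i < m then (4*n+4*i+6 ≤ k ∨ k ≤ 4*n+4*i+4)
       else if i < M then (4*i+4 ≤ k ∧ k ≤ 16*n-4*i-4)
       else (20*n+4*i ≤ k ∧ k ≤ 20*n+4*i+1)) := by
  split_ifs with h1 h2
  · rw [mem_big hn h1, pt_le hn, pt_le hn]
  · rw [mem_mid hn hMn h1 h2, pt_le hn, pt_le hn]
  · rw [mem_small hn h1 h2, pt_le hn, pt_le hn]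

lemma doubly_iff (hmM : m < M) (hMn : M ≤ n) {i j : ℕ} (hin : i < n) (hjn : j < n)
    (hij : i < j) :
    DoublyIntersects (myArc n m M i) (myArc n m M j) ↔ (i < m ∧ j < M) := by
  have hn : 0 < n := by omega
  show (myArc n m M i).Mem (pt n (kval n m M j true)) ∧
    (myArc n m M i).Mem (pt n (kval n m M j false)) ∧
    (myArc n m M j).Mem (pt n (kval n m M i true)) ∧
    (myArc n m M j).Mem (pt n (kval n m M i false)) ↔ _
  rw [mem_pt hn hMn, mem_pt hn hMn, mem_pt hn hMn, mem_pt hn hMn]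
  simp only [kval]
  split_ifs <;> omega

end MD

/-- There exists a family of `n` circular arcs with maximum agreement number `M`
and minimum agreement number `m` (for `0 ≤ m < M ≤ n`) having exactly
`m(M-1) - C(m,2)` doubly intersecting pairs. -/
theorem exists_max_double_count (n M m : ℕ) (hmM : m < M) (hMn : M ≤ n) :
    ∃ A : Fin n → Arc, (∀ i, (A i).InCircle) ∧ DistinctEndpoints A ∧
      IsMaxAgreement A M ∧ IsMinAgreement A m ∧
      (doubleCount A : ℤ) = m * ((M : ℤ) - 1) - m.choose 2 := by
  have hn : 0 < n := by omega
  refine ⟨fun i => MD.myArc n m M i.val, ?_, ?_, ?_, ?_, ?_⟩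
  · -- InCircle
    intro i
    have hi := i.isLt
    refine ⟨⟨MD.pt_nonneg _ _, MD.pt_lt_one hn ?_⟩, ⟨MD.pt_nonneg _ _, MD.pt_lt_one hn ?_⟩⟩ <;>
      · simp only [MD.kval]
        split_ifs <;> omega
  · -- DistinctEndpoints
    rintro ⟨i, b⟩ ⟨j, b'⟩ h
    simp only at h
    have hi := i.isLt
    have hj := j.isLt
    cases b <;> cases b' <;> simp only [Bool.false_eq_true, if_true, if_false, ite_true,
      ite_false] at h <;>
    · have hk : MD.kval n m M i.val _ = MD.kval n m M j.val _ := MD.pt_inj hn h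
      simp only [MD.kval, Bool.false_eq_true, if_true, if_false, ite_true, ite_false] at hk
      first
      | (exfalso; split_ifs at hk <;> omega)
      | (have : i.val = j.val := by split_ifs at hk <;> omega
         simp [Prod.ext_iff, Fin.ext_iff, this])
  · -- IsMaxAgreement
    constructor
    · intro p hp
      show (Finset.univ.filter fun i : Fin n => (MD.myArc n m M i.val).Mem p).card ≤ M
      by_cases hps : p < MD.pt n (20*n)
      · have hsub : (Finset.univ.filter fun i : Fin n => (MD.myArc n m M i.val).Mem p) ⊆
            Finset.univ.filter (fun i : Fin n => i.val < M) := by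
          intro i hi
          simp only [Finset.mem_filter, Finset.mem_univ, true_and] at hi ⊢
          by_contra hM
          rw [MD.mem_small hn (by omega) hM] at hi
          have h20 : MD.pt n (20*n) ≤ MD.pt n (20*n+4*i.val) := (MD.pt_le hn).2 (by omega)
          linarith [hi.1]
        exact le_trans (Finset.card_le_card hsub) (le_of_eq (MD.card_val_lt hMn))
      · push_neg at hps
        have hsub : (Finset.univ.filter fun i : Fin n => (MD.myArc n m M i.val).Mem p) ⊆
            (Finset.univ.filter fun i : Fin n => i.val < m) ∪
            (Finset.univ.filter fun i : Fin n => ¬ i.val < M ∧ (MD.myArc n m M i.val).Mem p) := by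
          intro i hi
          simp only [Finset.mem_filter, Finset.mem_univ, true_and, Finset.mem_union] at hi ⊢
          by_cases h1 : i.val < m
          · exact Or.inl h1
          · refine Or.inr ⟨?_, hi⟩
            intro h2
            rw [MD.mem_mid hn hMn h1 h2] at hi
            have hlt : MD.pt n (16*n-4*i.val-4) < MD.pt n (20*n) := (MD.pt_lt hn).2 (by omega)
            linarith [hi.2]
        have hcS : (Finset.univ.filter fun i : Fin n =>
            ¬ i.val < M ∧ (MD.myArc n m M i.val).Mem p).card ≤ 1 := by
          rw [Finset.card_le_one]
          intro a ha b hb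
          simp only [Finset.mem_filter, Finset.mem_univ, true_and] at ha hb
          rw [MD.mem_small hn (by omega) ha.1] at ha
          rw [MD.mem_small hn (by omega) hb.1] at hb
          have h1 := (MD.pt_le hn).1 (le_trans ha.2.1 hb.2.2)
          have h2 := (MD.pt_le hn).1 (le_trans hb.2.1 ha.2.2)
          exact Fin.ext (by omega)
        calc (Finset.univ.filter fun i : Fin n => (MD.myArc n m M i.val).Mem p).card
            ≤ _ := Finset.card_le_card hsub
          _ ≤ (Finset.univ.filter fun i : Fin n => i.val < m).card + _ := Finset.card_union_le _ _
          _ ≤ m + 1 := by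
              rw [MD.card_val_lt (by omega)]
              exact Nat.add_le_add_left hcS m
          _ ≤ M := by omega
    · refine ⟨MD.pt n (12*n), ⟨MD.pt_nonneg _ _, MD.pt_lt_one hn (by omega)⟩, ?_⟩
      show (Finset.univ.filter fun i : Fin n => (MD.myArc n m M i.val).Mem (MD.pt n (12*n))).card = M
      have hset : (Finset.univ.filter fun i : Fin n => (MD.myArc n m M i.val).Mem (MD.pt n (12*n)))
          = Finset.univ.filter (fun i : Fin n => i.val < M) := by
        apply Finset.filter_congr
        intro i _
        rw [MD.mem_pt hn hMn]
        have hi := i.isLt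
        split_ifs <;> omega
      rw [hset, MD.card_val_lt hMn]
  · -- IsMinAgreement
    constructor
    · intro p hp
      show m ≤ (Finset.univ.filter fun i : Fin n => (MD.myArc n m M i.val).Mem p).card
      by_cases hall : ∀ i : Fin n, i.val < m → (MD.myArc n m M i.val).Mem p
      · have hsub : (Finset.univ.filter fun i : Fin n => i.val < m) ⊆
            (Finset.univ.filter fun i : Fin n => (MD.myArc n m M i.val).Mem p) := by
          intro i hi
          simp only [Finset.mem_filter, Finset.mem_univ, true_and] at hi ⊢
          exact hall i hi
        calc m = (Finset.univ.filter fun i : Fin n => i.val < m).card :=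
              (MD.card_val_lt (by omega)).symm
          _ ≤ _ := Finset.card_le_card hsub
      · push_neg at hall
        obtain ⟨i0, hi0m, hi0⟩ := hall
        rw [MD.mem_big hn hi0m] at hi0
        push_neg at hi0
        obtain ⟨hgap2, hgap1⟩ := hi0
        have hsub : ((Finset.univ.filter fun j : Fin n => j.val < M).erase i0) ⊆
            (Finset.univ.filter fun i : Fin n => (MD.myArc n m M i.val).Mem p) := by
          intro j hj
          rw [Finset.mem_erase] at hj
          obtain ⟨hne, hj'⟩ := hj
          simp only [Finset.mem_filter, Finset.mem_univ, true_and] at hj' ⊢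
          have hjn := j.isLt
          have hi0n := i0.isLt
          by_cases h1 : j.val < m
          · rw [MD.mem_big hn h1]
            have hvne : j.val ≠ i0.val := fun h => hne (Fin.ext h)
            rcases lt_or_gt_of_ne hvne with hlt | hgt
            · refine Or.inl (le_trans ((MD.pt_le hn).2 (by omega)) hgap1.le)
            · refine Or.inr (le_trans hgap2.le ((MD.pt_le hn).2 (by omega)))
          · rw [MD.mem_mid hn hMn h1 hj']
            constructor
            · exact le_trans ((MD.pt_le hn).2 (by omega)) hgap1.le
            · exact le_trans hgap2.le ((MD.pt_le hn).2 (by omega))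
        have hcard : ((Finset.univ.filter fun j : Fin n => j.val < M).erase i0).card = M - 1 := by
          rw [Finset.card_erase_of_mem, MD.card_val_lt hMn]
          simp only [Finset.mem_filter, Finset.mem_univ, true_and]
          omega
        calc m ≤ M - 1 := by omega
          _ = _ := hcard.symm
          _ ≤ _ := Finset.card_le_card hsub
    · refine ⟨MD.pt n (28*n), ⟨MD.pt_nonneg _ _, MD.pt_lt_one hn (by omega)⟩, ?_⟩
      show (Finset.univ.filter fun i : Fin n => (MD.myArc n m M i.val).Mem (MD.pt n (28*n))).card = m
      have hset : (Finset.univ.filter fun i : Fin n => (MD.myArc n m M i.val).Mem (MD.pt n (28*n)))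
          = Finset.univ.filter (fun i : Fin n => i.val < m) := by
        apply Finset.filter_congr
        intro i _
        rw [MD.mem_pt hn hMn]
        have hi := i.isLt
        split_ifs <;> omega
      rw [hset, MD.card_val_lt (by omega)]
  · -- doubleCount
    show ((Finset.univ.filter fun q : Fin n × Fin n =>
        q.1 < q.2 ∧ DoublyIntersects (MD.myArc n m M q.1.val) (MD.myArc n m M q.2.val)).card : ℤ)
        = m * ((M : ℤ) - 1) - m.choose 2
    have hset : (Finset.univ.filter fun q : Fin n × Fin n =>
        q.1 < q.2 ∧ DoublyIntersects (MD.myArc n m M q.1.val) (MD.myArc n m M q.2.val))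
        = Finset.univ.filter (fun q : Fin n × Fin n =>
            q.1 < q.2 ∧ (q.1.val < m ∧ q.2.val < M)) := by
      apply Finset.filter_congr
      rintro ⟨i, j⟩ -
      exact and_congr_right fun hij => MD.doubly_iff hmM hMn i.isLt j.isLt hij
    rw [hset]
    have hcount : (Finset.univ.filter (fun q : Fin n × Fin n =>
        q.1 < q.2 ∧ (q.1.val < m ∧ q.2.val < M))).card
        = ∑ i ∈ Finset.range m, (M - 1 - i) := by
      rw [Finset.card_filter, Fintype.sum_prod_type]
      have step : ∀ i : Fin n, (∑ j : Fin n,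
          if i < j ∧ (i.val < m ∧ j.val < M) then 1 else 0)
          = if i.val < m then M - 1 - i.val else 0 := by
        intro i
        rw [← Finset.card_filter]
        by_cases him : i.val < m
        · rw [if_pos him]
          have heq : (Finset.univ.filter fun j : Fin n => i < j ∧ (i.val < m ∧ j.val < M))
              = Finset.univ.filter fun j : Fin n => i.val < j.val ∧ j.val < M := by
            apply Finset.filter_congr
            intro j _
            rw [Fin.lt_def]
            tauto
          rw [heq, MD.card_val_between hMn]
          omega
        · rw [if_neg him]
          rw [Finset.filter_false_of_mem, Finset.card_empty]
          intro j _
          tauto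
      rw [Finset.sum_congr rfl (fun i _ => step i)]
      rw [Fin.sum_univ_eq_sum_range (fun i => if i < m then M - 1 - i else 0)]
      have h2 := Finset.sum_subset (f := fun i => if i < m then M - 1 - i else 0)
        (Finset.range_subset_range.2 (show m ≤ n by omega))
        (fun x _ hx => if_neg (by simpa using hx))
      rw [← h2]
      exact Finset.sum_congr rfl (fun i hi => if_pos (Finset.mem_range.1 hi))
    rw [hcount]
    rw [Nat.cast_sum]
    rw [Finset.sum_congr rfl (fun i hi => (show ((M - 1 - i : ℕ) : ℤ) = (M : ℤ) - 1 - i by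
      have := Finset.mem_range.1 hi; omega))]
    rw [Finset.sum_sub_distrib, Finset.sum_const, Finset.card_range]
    have hgauss : ∑ i ∈ Finset.range m, (i : ℤ) = (m.choose 2 : ℤ) := by
      rw [← Nat.cast_sum, MD.sum_id_choose]
    rw [hgauss, nsmul_eq_mul]
end

section
/- For integers n, M, m with 0 ≤ m < M ≤ n and M + m ≥ n + 1, there exists a collection of n circular arcs with maximum agreement number M and minimum agreement number m in which every pair of arcs intersects (the intersection graph is complete with C(n,2) edges). -/
open scoped Classical

/-!
Place the starts of the arcs at the odd slots `1, 3, …, 2n - 1` and their ends at the even slots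
`2d, 2d + 2, …, 2(n + d - 1)` of a circle divided into `2(n + d)` slots, where `d = M - m`, and
let the arc with the `i`-th start end at the `(i + m mod n)`-th end. Going around the circle from
`0`, the number of starts passed minus the number of ends passed stays between `0` and `d`, and
exactly `n - m` arcs do not wrap around `0`; hence every agreement number lies in `[m, m + d]`,
with `m` attained at `0` and `m + d` at slot `2d`. The two bounds on the running count are
witnessed by matching each end with an earlier start and each start after the `d`-th with an
earlier end; both matchings are rotations of the indices. For arcs `i < j`, either
`j - i < m + d` and arc `i` contains the start of arc `j`, or arc `j` wraps around `0` and, as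
`2m + d > n`, reaches the start of arc `i`.
-/

open Finset

theorem Arc.mem_x (A : Arc) : A.Mem A.x := by
  unfold Arc.Mem memArc
  split_ifs with h
  · exact ⟨le_rfl, h⟩
  · exact Or.inl le_rfl

theorem Intersects.symm {A B : Arc} (h : Intersects A B) : Intersects B A :=
  let ⟨p, hp, hA, hB⟩ := h
  ⟨p, hp, hB, hA⟩

theorem intersects_of_mem_x {A B : Arc} (hB : B.InCircle) (h : A.Mem B.x) : Intersects A B :=
  ⟨B.x, hB.1, h, B.mem_x⟩

theorem memArc_comp_iff {α : Type*} [LinearOrder α] {f : α → ℝ} (hf : StrictMono f)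
    (a b c : α) :
    memArc (f a) (f b) (f c) ↔ if a ≤ b then a ≤ c ∧ c ≤ b else a ≤ c ∨ c ≤ b := by
  simp only [memArc, hf.le_iff_le]

section Family

variable {n : ℕ} (A : Fin n → Arc)

noncomputable def numNonwrapping : ℕ := #{i | (A i).x ≤ (A i).y}

theorem agree_add_numNonwrapping (p : ℝ) :
    agree A p + numNonwrapping A = #{i | (A i).x ≤ p} + #{i | p ≤ (A i).y} := by
  simp only [agree, numNonwrapping, card_filter, ← sum_add_distrib]
  refine sum_congr rfl fun i _ => ?_
  unfold Arc.Mem memArc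
  split_ifs <;> first | rfl | (exfalso; tauto) | (exfalso; linarith)

theorem le_agree_add_numNonwrapping {σ : Fin n → Fin n} (hσ : Function.Injective σ)
    (hle : ∀ i, (A (σ i)).x ≤ (A i).y) (p : ℝ) : n ≤ agree A p + numNonwrapping A := by
  have hsplit := card_filter_add_card_filter_not (s := univ) (fun i => p ≤ (A i).y)
  have hmatch : #{i | ¬p ≤ (A i).y} ≤ #{i | (A i).x ≤ p} := by
    refine card_le_card_of_injOn σ (fun i hi => ?_) hσ.injOn
    simp only [mem_coe, mem_filter, mem_univ, true_and, not_le] at hi ⊢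
    exact (hle i).trans hi.le
  rw [card_univ, Fintype.card_fin] at hsplit
  rw [agree_add_numNonwrapping]
  omega

theorem agree_add_numNonwrapping_le (E : Finset (Fin n)) {τ : Fin n → Fin n}
    (hτ : Set.InjOn τ ↑Eᶜ) (hlt : ∀ i ∉ E, (A (τ i)).y < (A i).x) (p : ℝ) :
    agree A p + numNonwrapping A ≤ n + #E := by
  have hsplit := card_filter_add_card_filter_not (s := univ) (fun i => p ≤ (A i).y)
  have hmatch : #(({i | (A i).x ≤ p} : Finset (Fin n)) \ E) ≤ #{i | ¬p ≤ (A i).y} := by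
    refine card_le_card_of_injOn τ (fun i hi => ?_) (hτ.mono fun i hi => ?_)
    · simp only [mem_coe, mem_sdiff, mem_filter, mem_univ, true_and, not_le] at hi ⊢
      exact (hlt i hi.2).trans_le hi.1
    · simp only [mem_coe, mem_sdiff] at hi
      simpa using hi.2
  have hE := card_le_card_sdiff_add_card (s := {i | (A i).x ≤ p}) (t := E)
  rw [card_univ, Fintype.card_fin] at hsplit
  rw [agree_add_numNonwrapping]
  omega

theorem edgeCount_eq_choose_two (h : ∀ i j, i ≠ j → Intersects (A i) (A j)) :
    edgeCount A = n.choose 2 := by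
  calc edgeCount A = #{q : Fin n × Fin n | q.1 < q.2} := by
        unfold edgeCount
        congr 1
        ext q
        simpa using fun hq => h _ _ hq.ne
    _ = n.choose 2 := by simpa using Fintype.card_product_filter_lt (α := Fin n)

end Family

section ShiftedArcs

variable {n m d : ℕ}

/-- `(i + k) % n` for `i < n` and `k ≤ n`, written without `%` so that `omega` can reason
about it. -/
def rot (n k i : ℕ) : ℕ := if i + k < n then i + k else i + k - n

theorem rot_lt {k i : ℕ} (hk : k ≤ n) (hi : i < n) : rot n k i < n := by
  unfold rot; split_ifs <;> omega

noncomputable def slot (n d k : ℕ) : ℝ := k / (2 * (n + d) : ℝ)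

theorem slot_strictMono (hd : 0 < d) : StrictMono (slot n d) := fun a b h =>
  div_lt_div_of_pos_right (by exact_mod_cast h) (by positivity)

theorem slot_mem_Ico {k : ℕ} (hk : k < 2 * (n + d)) : slot n d k ∈ Set.Ico (0 : ℝ) 1 := by
  have hR : (0 : ℝ) < 2 * (n + d) := by norm_cast; omega
  refine ⟨by unfold slot; positivity, ?_⟩
  rw [slot, div_lt_one hR]
  exact_mod_cast hk

noncomputable def shiftedArcs (n m d : ℕ) : Fin n → Arc :=
  fun i => ⟨slot n d (2 * i + 1), slot n d (2 * rot n m i + 2 * d)⟩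

theorem shiftedArcs_inCircle (hm : m ≤ n) (i : Fin n) : (shiftedArcs n m d i).InCircle :=
  ⟨slot_mem_Ico (by omega), slot_mem_Ico (by have := rot_lt hm i.isLt; omega)⟩

theorem shiftedArcs_distinctEndpoints (hd : 0 < d) :
    DistinctEndpoints (shiftedArcs n m d) := by
  rintro ⟨i, _ | _⟩ ⟨j, _ | _⟩ h <;>
    simp only [shiftedArcs, Bool.false_eq_true, if_true, if_false] at h <;>
    have h' := (slot_strictMono hd).injective h
  · have := i.isLt; have := j.isLt
    unfold rot at h'; split_ifs at h' <;> (congr 1; ext; omega)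
  · unfold rot at h'; split_ifs at h' <;> omega
  · unfold rot at h'; split_ifs at h' <;> omega
  · congr 1; ext; omega

theorem numNonwrapping_shiftedArcs (hd : 0 < d) (hmd : m + d ≤ n) :
    numNonwrapping (shiftedArcs n m d) = n - m := by
  have hfilter : numNonwrapping (shiftedArcs n m d) = #{i : Fin n | i < n - m} := by
    unfold numNonwrapping
    congr 1
    ext i
    simp only [mem_filter, mem_univ, true_and, shiftedArcs, (slot_strictMono hd).le_iff_le, rot]
    split_ifs <;> omega
  rw [hfilter, Fin.card_filter_val_lt]
  omega

theorem le_agree_shiftedArcs (hd : 0 < d) (hmd : m + d ≤ n) (p : ℝ) :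
    m ≤ agree (shiftedArcs n m d) p := by
  have hmatch := le_agree_add_numNonwrapping (shiftedArcs n m d)
    (σ := fun i => ⟨rot n m i, rot_lt (by omega) i.isLt⟩) (fun i j h => ?_) (fun i => ?_) p
  · rw [numNonwrapping_shiftedArcs hd hmd] at hmatch
    omega
  · have hi := i.isLt; have hj := j.isLt
    simp only [Fin.mk.injEq, rot] at h
    ext
    split_ifs at h <;> omega
  · show slot n d (2 * rot n m i + 1) ≤ slot n d (2 * rot n m i + 2 * d)
    exact (slot_strictMono hd).monotone (by omega)

theorem agree_shiftedArcs_le (hd : 0 < d) (hmd : m + d ≤ n) (p : ℝ) :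
    agree (shiftedArcs n m d) p ≤ m + d := by
  have hmatch := agree_add_numNonwrapping_le (shiftedArcs n m d) {i | i < d}
    (τ := fun i => ⟨rot n (n - d - m) i, rot_lt (by omega) i.isLt⟩)
    (fun i _ j _ h => ?_) (fun i hi => ?_) p
  · rw [numNonwrapping_shiftedArcs hd hmd, Fin.card_filter_val_lt] at hmatch
    omega
  · have hi := i.isLt; have hj := j.isLt
    simp only [Fin.mk.injEq, rot] at h
    ext
    split_ifs at h <;> omega
  · simp only [mem_filter, mem_univ, true_and, not_lt] at hi
    have := i.isLt
    refine (slot_strictMono hd) ?_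
    simp only [rot]
    split_ifs <;> omega

theorem agree_shiftedArcs_slot (hd : 0 < d) (hmd : m + d ≤ n) {t : ℕ} (ht : t ≤ d) :
    agree (shiftedArcs n m d) (slot n d (2 * t)) = m + t := by
  have hcount := agree_add_numNonwrapping (shiftedArcs n m d) (slot n d (2 * t))
  have hstarts : #{i | (shiftedArcs n m d i).x ≤ slot n d (2 * t)} = t := by
    rw [filter_congr (q := fun i : Fin n => i < t) fun i _ => by
      simp only [shiftedArcs, (slot_strictMono hd).le_iff_le]; omega, Fin.card_filter_val_lt]
    omega
  have hends : #{i | slot n d (2 * t) ≤ (shiftedArcs n m d i).y} = n := by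
    have hle (i : Fin n) : slot n d (2 * t) ≤ (shiftedArcs n m d i).y :=
      (slot_strictMono hd).monotone (by omega)
    simp [hle]
  rw [numNonwrapping_shiftedArcs hd hmd, hstarts, hends] at hcount
  omega

theorem isMaxAgreement_shiftedArcs (hd : 0 < d) (hmd : m + d ≤ n) :
    IsMaxAgreement (shiftedArcs n m d) (m + d) :=
  ⟨fun p _ => agree_shiftedArcs_le hd hmd p, slot n d (2 * d), slot_mem_Ico (by omega),
    agree_shiftedArcs_slot hd hmd le_rfl⟩

theorem isMinAgreement_shiftedArcs (hd : 0 < d) (hmd : m + d ≤ n) :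
    IsMinAgreement (shiftedArcs n m d) m :=
  ⟨fun p _ => le_agree_shiftedArcs hd hmd p, slot n d (2 * 0), slot_mem_Ico (by omega),
    agree_shiftedArcs_slot hd hmd (Nat.zero_le d)⟩

theorem shiftedArcs_intersects (hd : 0 < d) (hmd : m + d ≤ n) (hcover : n < 2 * m + d)
    (i j : Fin n) (hij : i ≠ j) : Intersects (shiftedArcs n m d i) (shiftedArcs n m d j) := by
  have hstart : (shiftedArcs n m d i).Mem (shiftedArcs n m d j).x ∨
      (shiftedArcs n m d j).Mem (shiftedArcs n m d i).x := by
    simp only [Arc.Mem, shiftedArcs, memArc_comp_iff (slot_strictMono hd), rot]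
    have := i.isLt; have := j.isLt; have := Fin.val_ne_of_ne hij
    split_ifs <;> omega
  rcases hstart with h | h
  · exact intersects_of_mem_x (shiftedArcs_inCircle (by omega) j) h
  · exact (intersects_of_mem_x (shiftedArcs_inCircle (by omega) i) h).symm

end ShiftedArcs

/-- Theorem 5.6: for `0 ≤ m < M ≤ n` with `M + m ≥ n + 1`, there is a family of
`n` circular arcs with maximum agreement number `M` and minimum agreement number
`m` in which every pair of arcs intersects, so the intersection graph is complete
with `C(n,2)` edges. -/
theorem exists_complete_intersection_graph (n M m : ℕ) (hmM : m < M) (hMn : M ≤ n)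
    (hsum : n + 1 ≤ M + m) :
    ∃ A : Fin n → Arc, (∀ i, (A i).InCircle) ∧ DistinctEndpoints A ∧
      IsMaxAgreement A M ∧ IsMinAgreement A m ∧
      (∀ i j : Fin n, i ≠ j → Intersects (A i) (A j)) ∧
      edgeCount A = n.choose 2 := by
  obtain ⟨d, rfl⟩ : ∃ d, M = m + d := ⟨M - m, by omega⟩
  have hd : 0 < d := by omega
  have hintersects := shiftedArcs_intersects hd hMn (by omega)
  exact ⟨shiftedArcs n m d, shiftedArcs_inCircle (by omega), shiftedArcs_distinctEndpoints hd,
    isMaxAgreement_shiftedArcs hd hMn, isMinAgreement_shiftedArcs hd hMn, hintersects,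
    edgeCount_eq_choose_two _ hintersects⟩
end

section
/- Suppose a cyclic sequence r_1,...,r_{2n} of integers satisfies |r_i − r_{i−1}| = 1 for all i (cyclically), has exactly n increases and n decreases, maximum M, and minimum m with r_{2n} = m. If at position j we have r_j < M and the prefix before j matches the maximal sequence (r_i = r'_i for all i < j where r' is the maximal running count sequence), then r_j ≤ r'_j − 2 and r_{j-1} ≤ M − 1. -/
/-- Lemma 4.2 (key step): let `r` be a valid running count sequence of length
`2n` (cyclic ±1 steps, `n` increases and `n` decreases, maximum `M`, minimum
`m`, `r (2n) = m`) and let `r'` be the maximal running count sequence for the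
parameters `M, m, n`.  If at some position `j` we have `r j < r' j ≤ M` while
the prefix before `j` matches the maximal sequence (`r i = r' i` for all
`i < j`), then `r j ≤ r' j - 2` and `r (j-1) ≤ M - 1`. -/
theorem first_deviation_from_maximal (n M m : ℕ) (hmM : m < M) (hMn : M ≤ n)
    (r' : ℕ → ℤ)
    (hr' : ∀ i, r' i =
      if i ≤ M - m then (m : ℤ) + i
      else if i ≤ (M - m) + 2*(n - M + m) then (M : ℤ) - (((i - (M - m)) % 2 : ℕ) : ℤ)
      else (M : ℤ) - ((i - ((M - m) + 2*(n - M + m)) : ℕ) : ℤ))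
    (r : ℕ → ℤ)
    (hstep : ∀ i ∈ Finset.Icc 1 (2*n), r i = r (i-1) + 1 ∨ r i = r (i-1) - 1)
    (hups : ((Finset.Icc 1 (2*n)).filter fun i => r i = r (i-1) + 1).card = n)
    (hcyc : r 0 = r (2*n))
    (hMub : ∀ i ∈ Finset.Icc 1 (2*n), r i ≤ (M : ℤ))
    (hMmem : ∃ i ∈ Finset.Icc 1 (2*n), r i = (M : ℤ))
    (hmlb : ∀ i ∈ Finset.Icc 1 (2*n), (m : ℤ) ≤ r i)
    (hend : r (2*n) = (m : ℤ))
    (j : ℕ) (hj : j ∈ Finset.Icc 1 (2*n))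
    (hlt : r j < r' j) (hjM : r j < (M : ℤ))
    (hprefix : ∀ i < j, r i = r' i) :
    r j ≤ r' j - 2 ∧ r (j-1) ≤ (M : ℤ) - 1 := by
  rw [Finset.mem_Icc] at hj
  have hstep' : r' j = r' (j-1) + 1 ∨ r' j = r' (j-1) - 1 := by
    obtain ⟨i, rfl⟩ : ∃ i, j = i + 1 := ⟨j - 1, by omega⟩
    simp only [Nat.add_sub_cancel]
    rw [hr' (i+1), hr' i]
    split_ifs <;> omega
  have hub : r' j ≤ (M : ℤ) := by
    rw [hr' j]; split_ifs <;> omega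
  have h1 : r (j-1) = r' (j-1) := hprefix _ (by omega)
  have h2 := hstep j (Finset.mem_Icc.mpr hj)
  omega
end

section
/- Tur\u00e1n-type consequence for interval graphs: let 0 < β ≤ 1 and let G be the intersection graph of n intervals on a line. If G has more than β(2−β)·C(n,2) + o(n²) edges, then some point of the line is contained in more than βn intervals. (Precisely: for integers M ≤ n, if the number of intersecting pairs exceeds (1/2)((M−1) + 2(M−1)n − (M−1)² − 2n) then some point lies in at least M intervals.) -/
/-!
Sort the intervals by left endpoint. An interval meets an earlier one only if that earlier one
contains its left endpoint, so if no point lies in `M` intervals, the `i`-th interval meets at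
most `min i (M - 2)` of its predecessors. Summing over `i` gives
`2 e ≤ (M - 2) (2 n - M + 1)`, which is the negation of the hypothesis on `e`.
-/

open scoped Classical
open Finset

lemma card_filter_ne_eq_two_mul {α : Type*} [Fintype α] [LinearOrder α] {r : α → α → Prop}
    (hr : ∀ i j, r i j → r j i) :
    #{q : α × α | q.1 ≠ q.2 ∧ r q.1 q.2} = 2 * #{q : α × α | q.1 < q.2 ∧ r q.1 q.2} := by
  have hswap : #{q : α × α | q.2 < q.1 ∧ r q.1 q.2} = #{q : α × α | q.1 < q.2 ∧ r q.1 q.2} :=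
    card_equiv (Equiv.prodComm α α) fun q => by simp [Iff.intro (hr q.1 q.2) (hr q.2 q.1)]
  rw [two_mul]
  nth_rw 2 [← hswap]
  rw [← card_union_of_disjoint]
  · congr 1
    ext q
    simp only [mem_filter, mem_univ, true_and, mem_union, ne_iff_lt_or_gt]
    tauto
  · exact disjoint_filter.2 fun q _ h1 h2 => lt_asymm h1.1 h2.1

lemma card_filter_lt_comp_perm {α : Type*} [Fintype α] [LinearOrder α] {r : α → α → Prop}
    (hr : ∀ i j, r i j → r j i) (σ : Equiv.Perm α) :
    #{q : α × α | q.1 < q.2 ∧ r (σ q.1) (σ q.2)} = #{q : α × α | q.1 < q.2 ∧ r q.1 q.2} := by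
  refine Nat.eq_of_mul_eq_mul_left two_pos ?_
  rw [← card_filter_ne_eq_two_mul hr, ← card_filter_ne_eq_two_mul (r := fun i j => r (σ i) (σ j))
    fun i j => hr (σ i) (σ j)]
  exact card_equiv (σ.prodCongr σ) fun q => by simp

lemma card_filter_lt_le_sum_range_min {n : ℕ} {r : Fin n → Fin n → Prop} {d : ℕ}
    (hr : ∀ i, #{j | j < i ∧ r j i} ≤ d) :
    #{q : Fin n × Fin n | q.1 < q.2 ∧ r q.1 q.2} ≤ ∑ i ∈ range n, min i d := by
  calc #{q : Fin n × Fin n | q.1 < q.2 ∧ r q.1 q.2}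
      = ∑ i : Fin n, #{j | j < i ∧ r j i} := by
        simp only [card_filter, Fintype.sum_prod_type_right]
    _ ≤ ∑ i : Fin n, min (i : ℕ) d := by
        gcongr with i
        refine le_min ?_ (hr i)
        calc #{j | j < i ∧ r j i} ≤ #(Iio i) := card_le_card fun j => by simp +contextual
          _ = i := Fin.card_Iio i
    _ = ∑ i ∈ range n, min i d := Fin.sum_univ_eq_sum_range (fun i => min i d) n

lemma two_mul_sum_range_min {n d : ℕ} (hdn : d ≤ n) :
    ((2 * ∑ i ∈ range n, min i d : ℕ) : ℤ) = d * (2 * n - d - 1) := by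
  induction n, hdn using Nat.le_induction with
  | base =>
    rw [sum_congr rfl fun i hi => min_eq_left (mem_range.1 hi).le, mul_comm,
      sum_range_id_mul_two]
    rcases d with _ | d
    · simp
    · push_cast; ring
  | succ n hdn ih =>
    rw [sum_range_succ, mul_add, Nat.cast_add, ih, min_eq_right hdn]
    push_cast; ring

lemma card_filter_lt_Icc_inter_nonempty_add_one_le {ι α : Type*} [Fintype ι] [LinearOrder ι] [LinearOrder α]
    {a b : ι → α} (hab : ∀ i, a i ≤ b i) (ha : Monotone a) (i : ι) :
    #{j | j < i ∧ (Set.Icc (a j) (b j) ∩ Set.Icc (a i) (b i)).Nonempty} + 1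
      ≤ #{j | a i ∈ Set.Icc (a j) (b j)} := by
  rw [← card_insert_of_notMem (s := {j | j < i ∧ _}) (a := i) (by simp)]
  refine card_le_card fun j hj => ?_
  rcases mem_insert.1 hj with rfl | hj
  · simp [hab j]
  · simp only [mem_filter, mem_univ, true_and] at hj ⊢
    obtain ⟨hji, x, hxj, hxi⟩ := hj
    exact ⟨ha hji.le, hxi.1.trans hxj.2⟩

/-- Abbott–Katchalski (the `m = 0` specialization): given `n` intervals
`[a i, b i]` on the real line and an integer `M ≤ n`, if the number of
intersecting pairs exceeds `(1/2)((M-1) + 2(M-1)n - (M-1)² - 2n)`, then some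
point of the line lies in at least `M` of the intervals. -/
theorem interval_turan {n : ℕ} (a b : Fin n → ℝ) (hab : ∀ i, a i ≤ b i)
    (M : ℕ) (hMn : M ≤ n) (e : ℕ)
    (he : e = (Finset.univ.filter fun q : Fin n × Fin n =>
      q.1 < q.2 ∧ (Set.Icc (a q.1) (b q.1) ∩ Set.Icc (a q.2) (b q.2)).Nonempty).card)
    (hgt : (2*e : ℤ) > ((M:ℤ)-1) + 2*((M:ℤ)-1)*n - ((M:ℤ)-1)^2 - 2*n) :
    ∃ p : ℝ, M ≤ (Finset.univ.filter fun i => p ∈ Set.Icc (a i) (b i)).card := by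
  by_contra! hdepth
  let σ := Tuple.sort a
  have hlocal (i : Fin n) : #{j | j < i ∧ (Set.Icc (a (σ j)) (b (σ j)) ∩
      Set.Icc (a (σ i)) (b (σ i))).Nonempty} + 2 ≤ M := by
    have hcard : #{j | a (σ i) ∈ Set.Icc (a (σ j)) (b (σ j))}
        = #{k | a (σ i) ∈ Set.Icc (a k) (b k)} := card_equiv σ (by simp)
    have := card_filter_lt_Icc_inter_nonempty_add_one_le (fun j => hab (σ j)) (Tuple.monotone_sort a) i
    have := hdepth (a (σ i))
    omega
  obtain ⟨d, rfl⟩ : ∃ d, M = d + 2 := by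
    obtain ⟨i⟩ : Nonempty (Fin n) := Fin.pos_iff_nonempty.1 (by have := hdepth 0; omega)
    exact ⟨M - 2, by have := hlocal i; omega⟩
  have hcount : e ≤ ∑ i ∈ range n, min i d := by
    rw [he, ← card_filter_lt_comp_perm
      (r := fun i j => (Set.Icc (a i) (b i) ∩ Set.Icc (a j) (b j)).Nonempty)
      (fun i j ⟨x, hi, hj⟩ => ⟨x, hj, hi⟩) σ]
    exact card_filter_lt_le_sum_range_min fun i => Nat.le_of_add_le_add_right (hlocal i)
  have hsum := two_mul_sum_range_min (show d ≤ n by omega)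
  push_cast at hgt hsum
  linarith
end
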